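/- arXiv:2307.15102 — 2 statements merged into one kernel-verified Lean document; each statement's English description precedes it below -/
import Mathlib

section
/- Let −∞ ≤ a < b ≤ ∞ and let I be one of the intervals (a,b), (a,b], [a,b), [a,b]. Let α, β : I → ℝ be continuous and let A(t) be the 2×2 real matrix with rows (α(t), β(t)) and (−β(t), α(t)). Suppose that κ₃₁(t) := ∫_t^b e^{−∫_t^s α(τ) dτ} ds exists for all t ∈ I, that K₃₁ := sup_{t∈I} κ₃₁(t) < ∞, and that lim_{t→b⁻} ∫_{t₀}^t α(s) ds = ∞ for t₀ ∈ (a,b). Then the system x' = A(t)x is Ulam stable on I (with respect to the Euclidean norm on ℝ²), and every Ulam constant K for x' = A(t)x on I satisfies K ≥ K₃₁. -/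
/-!
Identifying `ℝ²` with `ℂ` by `v ↦ v₀ + v₁ i` turns the system into `z' = λ(t) z` with
`λ = α - β i`. If `Λ` is an antiderivative of `λ`, the solutions are `c e^{Λ}`, and
`|e^{Λ(t)}| = e^{Re Λ(t)}` with `Re Λ(t) = ∫_{t₀}^t α`, so `κ₃₁(t) = e^{Re Λ(t)} ∫_t^b e^{-Re Λ}`.

Stability: if `|φ' - λφ| ≤ ε`, then `(φ e^{-Λ})' = (φ' - λφ) e^{-Λ}` is bounded by `ε e^{-Re Λ}`,
hence integrable up to `b`, and `c = φ e^{-Λ} + ∫_t^b (φ e^{-Λ})'` does not depend on `t`; this `c`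
gives `|φ(t) - c e^{Λ(t)}| ≤ ε κ₃₁(t)`.

Sharpness: `φ(t) = -e^{Λ(t)} ∫_t^b e^{-Re Λ}` has `|φ' - λφ| = 1`, and
`|φ(t) - c e^{Λ(t)}| = e^{Re Λ(t)} |∫_t^b e^{-Re Λ} + c|`. As `t → b⁻` the integral tends to `0`
while `Re Λ(t) → ∞`, so a bounded distance forces `c = 0`, and then the distance is `κ₃₁(t)`.
-/

open MeasureTheory Filter Set

noncomputable section

/-- The Euclidean norm `√(v₁² + v₂²)` on `ℝ²`. -/
def enorm2 (v : Fin 2 → ℝ) : ℝ := Real.sqrt ((v 0) ^ 2 + (v 1) ^ 2)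

/-- Ulam stability on `I` with constant `K` for the system `x' = A(t) x` on `ℝ²`,
with respect to the Euclidean norm. -/
def UlamStable2R (I : Set ℝ) (A : ℝ → Matrix (Fin 2) (Fin 2) ℝ) (K : ℝ) : Prop :=
  0 < K ∧
  ∀ ε : ℝ, 0 < ε →
    ∀ φ φd : ℝ → Fin 2 → ℝ,
      (∀ t ∈ I, HasDerivWithinAt φ (φd t) I t) →
      ContinuousOn φd I →
      (∀ t ∈ I, enorm2 (φd t - (A t).mulVec (φ t)) ≤ ε) →
      ∃ x : ℝ → Fin 2 → ℝ,
        (∀ t ∈ I, HasDerivWithinAt x ((A t).mulVec (x t)) I t) ∧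
        ∀ t ∈ I, enorm2 (φ t - x t) ≤ K * ε

/-- `κ₃₁(t) = ∫_t^b exp(-∫_t^s α) ds`. -/
def kappa31 (b : EReal) (al : ℝ → ℝ) (t : ℝ) : ℝ :=
  ∫ s in {s : ℝ | t < s ∧ (s : EReal) < b}, Real.exp (-∫ τ in t..s, al τ)

open Topology

section OrdConnected

variable {E : Type*} [NormedAddCommGroup E] [NormedSpace ℝ E] {I : Set ℝ}

lemma exists_ge_Iic_mem_nhdsWithin {t : ℝ} (ht : t ∈ I) : ∃ v ∈ I, t ≤ v ∧ Iic v ∈ 𝓝[I] t := by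
  by_cases h : ∃ v ∈ I, t < v
  · obtain ⟨v, hv, htv⟩ := h
    exact ⟨v, hv, htv.le, mem_nhdsWithin_of_mem_nhds (Iic_mem_nhds htv)⟩
  · exact ⟨t, ht, le_rfl, mem_of_superset self_mem_nhdsWithin
      fun v hv => not_lt.1 fun htv => h ⟨v, hv, htv⟩⟩

lemma exists_le_Ici_mem_nhdsWithin {t : ℝ} (ht : t ∈ I) : ∃ u ∈ I, u ≤ t ∧ Ici u ∈ 𝓝[I] t := by
  by_cases h : ∃ u ∈ I, u < t
  · obtain ⟨u, hu, hut⟩ := h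
    exact ⟨u, hu, hut.le, mem_nhdsWithin_of_mem_nhds (Ici_mem_nhds hut)⟩
  · exact ⟨t, ht, le_rfl, mem_of_superset self_mem_nhdsWithin
      fun u hu => not_lt.1 fun hut => h ⟨u, hu, hut⟩⟩

lemma Set.OrdConnected.exists_Icc_mem_nhdsWithin (hI : I.OrdConnected) {t : ℝ} (ht : t ∈ I) :
    ∃ u v, t ∈ Icc u v ∧ Icc u v ⊆ I ∧ Icc u v ∈ 𝓝[I] t := by
  obtain ⟨u, hu, hut, hun⟩ := exists_le_Ici_mem_nhdsWithin ht
  obtain ⟨v, hv, htv, hvn⟩ := exists_ge_Iic_mem_nhdsWithin ht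
  exact ⟨u, v, ⟨hut, htv⟩, hI.out hu hv, Ici_inter_Iic (a := u) (b := v) ▸ inter_mem hun hvn⟩

theorem Set.OrdConnected.hasDerivWithinAt_integral [CompleteSpace E] (hI : I.OrdConnected)
    {f : ℝ → E} (hf : ContinuousOn f I) {t₀ t : ℝ} (ht₀ : t₀ ∈ I) (ht : t ∈ I) :
    HasDerivWithinAt (fun u => ∫ s in t₀..u, f s) (f t) I t := by
  obtain ⟨u, v, htuv, huvI, huvn⟩ := hI.exists_Icc_mem_nhdsWithin ht
  have : Fact (t ∈ Icc u v) := ⟨htuv⟩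
  have hfuv : ContinuousOn f (Icc u v) := hf.mono huvI
  exact (intervalIntegral.integral_hasDerivWithinAt_right
    (hf.mono (hI.uIcc_subset ht₀ ht)).intervalIntegrable
    (hfuv.stronglyMeasurableAtFilter_nhdsWithin measurableSet_Icc t)
    (hfuv t htuv)).mono_of_mem_nhdsWithin huvn

theorem Set.OrdConnected.exists_eq_const_of_hasDerivWithinAt_zero (hI : I.OrdConnected)
    {f : ℝ → E} (hf : ∀ t ∈ I, HasDerivWithinAt f 0 I t) : ∃ c, ∀ t ∈ I, f t = c := by
  rcases I.eq_empty_or_nonempty with rfl | ⟨t₀, ht₀⟩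
  · exact ⟨0, fun t ht => ht.elim⟩
  refine ⟨f t₀, fun t ht => ?_⟩
  have h := hI.convex.norm_image_sub_le_of_norm_hasDerivWithin_le hf
    (fun _ _ => norm_zero.le) ht₀ ht
  rwa [zero_mul, norm_le_zero_iff, sub_eq_zero] at h

end OrdConnected

section Tail

variable {E : Type*} [NormedAddCommGroup E] [NormedSpace ℝ E]

def tailSet (b : EReal) (t : ℝ) : Set ℝ := {s : ℝ | t < s ∧ (s : EReal) < b}

lemma measurableSet_tailSet (b : EReal) (t : ℝ) : MeasurableSet (tailSet b t) :=
  measurableSet_Ioi.inter (measurableSet_lt measurable_coe_real_ereal measurable_const)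

lemma tailSet_antitone (b : EReal) : Antitone (tailSet b) :=
  fun _ _ h _ hs => ⟨h.trans_lt hs.1, hs.2⟩

lemma volume_tailSet_pos {b : EReal} {t : ℝ} (ht : (t : EReal) < b) :
    0 < volume (tailSet b t) := by
  obtain ⟨m, htm, hmb⟩ := EReal.exists_between_coe_real ht
  calc 0 < volume (Ioo t m) := by simpa using EReal.coe_lt_coe_iff.1 htm
    _ ≤ volume (tailSet b t) :=
      measure_mono fun s hs => ⟨hs.1, (EReal.coe_lt_coe_iff.2 hs.2).trans hmb⟩

lemma integral_tailSet_eq_add {f : ℝ → E} {b : EReal} {u v : ℝ} (huv : u ≤ v)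
    (hvb : (v : EReal) ≤ b) (hf : IntegrableOn f (tailSet b u)) :
    ∫ s in tailSet b u, f s = (∫ s in u..v, f s) + ∫ s in tailSet b v, f s := by
  have hsplit : tailSet b u = (tailSet b u ∩ Iic v) ∪ tailSet b v := by
    ext s
    constructor
    · intro hs
      by_cases hsv : s ≤ v
      · exact Or.inl ⟨hs, hsv⟩
      · exact Or.inr ⟨not_le.1 hsv, hs.2⟩
    · rintro (hs | hs)
      exacts [hs.1, tailSet_antitone b huv hs]
  have hdisj : Disjoint (tailSet b u ∩ Iic v) (tailSet b v) :=
    disjoint_left.2 fun s hs hs' => (hs.2.trans_lt hs'.1).false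
  -- the two sets can only differ at `v`, in case `v = b`
  have hae : (tailSet b u ∩ Iic v : Set ℝ) =ᵐ[volume] Ioc u v := by
    refine ae_eq_set.2 ⟨?_, measure_mono_null (fun s hs => ?_) (measure_singleton v)⟩
    · have hsub : tailSet b u ∩ Iic v ⊆ Ioc u v := fun s hs => ⟨hs.1.1, hs.2⟩
      rw [sdiff_eq_empty.2 hsub, measure_empty]
    · obtain ⟨⟨hus, hsv⟩, hs⟩ := hs
      by_contra hne
      exact hs ⟨⟨hus, (EReal.coe_lt_coe_iff.2 (lt_of_le_of_ne hsv hne)).trans_le hvb⟩, hsv⟩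
  rw [hsplit, setIntegral_union hdisj (measurableSet_tailSet b v)
    (hf.mono_set inter_subset_left) (hf.mono_set (tailSet_antitone b huv)),
    setIntegral_congr_set hae, intervalIntegral.integral_of_le huv]

theorem Set.OrdConnected.hasDerivWithinAt_integral_tailSet [CompleteSpace E] {I : Set ℝ}
    (hI : I.OrdConnected) {b : EReal} (hIb : ∀ t ∈ I, (t : EReal) ≤ b) {f : ℝ → E}
    (hf : ContinuousOn f I) (hfi : ∀ t ∈ I, IntegrableOn f (tailSet b t)) {t : ℝ} (ht : t ∈ I) :
    HasDerivWithinAt (fun u => ∫ s in tailSet b u, f s) (-f t) I t := by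
  have key : ∀ u ∈ I, ∫ s in tailSet b u, f s = (∫ s in tailSet b t, f s) - ∫ s in t..u, f s := by
    intro u hu
    rcases le_total t u with h | h
    · rw [integral_tailSet_eq_add h (hIb u hu) (hfi t ht)]
      abel
    · rw [integral_tailSet_eq_add h (hIb t ht) (hfi u hu), intervalIntegral.integral_symm]
      abel
  exact ((hI.hasDerivWithinAt_integral hf ht ht).const_sub _).congr key (key t ht)

lemma eventually_mem_tailSet {b : EReal} {t₀ : ℝ} (ht₀ : (t₀ : EReal) < b) :
    ∀ᶠ t in comap ((↑) : ℝ → EReal) (𝓝[<] b), t ∈ tailSet b t₀ :=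
  mem_comap.2 ⟨Ioo (t₀ : EReal) b, Ioo_mem_nhdsLT ht₀,
    fun _ ht => ⟨EReal.coe_lt_coe_iff.1 ht.1, ht.2⟩⟩

lemma neBot_comap_coe_nhdsLT {b : EReal} {t₀ : ℝ} (ht₀ : (t₀ : EReal) < b) :
    (comap ((↑) : ℝ → EReal) (𝓝[<] b)).NeBot := by
  refine comap_neBot fun s hs => ?_
  obtain ⟨l, hlb, hls⟩ := (mem_nhdsLT_iff_exists_Ioo_subset' ht₀).1 hs
  obtain ⟨m, hlm, hmb⟩ := EReal.exists_between_coe_real hlb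
  exact ⟨m, hls ⟨hlm, hmb⟩⟩

theorem tendsto_integral_tailSet {f : ℝ → E} {b : EReal} {t₀ : ℝ} (ht₀ : (t₀ : EReal) < b)
    (hf : IntegrableOn f (tailSet b t₀)) :
    Tendsto (fun t => ∫ s in tailSet b t, f s) (comap (↑) (𝓝[<] b)) (𝓝 0) := by
  have heq : ∀ᶠ t in comap ((↑) : ℝ → EReal) (𝓝[<] b),
      ∫ s in tailSet b t₀, (Ioi t).indicator f s = ∫ s in tailSet b t, f s := by
    filter_upwards [eventually_mem_tailSet ht₀] with t ht
    rw [setIntegral_indicator measurableSet_Ioi]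
    congr 2
    ext s
    exact ⟨fun hs => ⟨hs.2, hs.1.2⟩, fun hs => ⟨tailSet_antitone b ht.1.le hs, hs.1⟩⟩
  have hlim := tendsto_integral_filter_of_dominated_convergence (μ := volume.restrict _)
    (F := fun t s => (Ioi t).indicator f s) (f := fun _ => (0 : E)) (fun s => ‖f s‖)
    (Eventually.of_forall fun _ => hf.aestronglyMeasurable.indicator measurableSet_Ioi)
    (Eventually.of_forall fun _ => Eventually.of_forall fun _ => norm_indicator_le_norm_self _ _)
    hf.norm ((ae_restrict_mem (measurableSet_tailSet b t₀)).mono fun s hs =>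
      tendsto_const_nhds.congr' ((eventually_mem_tailSet hs.2).mono fun t ht =>
        (indicator_of_notMem (fun h => (lt_asymm h ht.1)) f).symm))
  simpa using hlim.congr' heq

/-- `κ₃₁` written with an antiderivative `ρ` of `α`. -/
def kappa (b : EReal) (ρ : ℝ → ℝ) (t : ℝ) : ℝ :=
  Real.exp (ρ t) * ∫ s in tailSet b t, Real.exp (-ρ s)

lemma kappa_pos {b : EReal} {ρ : ℝ → ℝ} {t : ℝ} (ht : (t : EReal) < b)
    (hρ : IntegrableOn (fun s => Real.exp (-ρ s)) (tailSet b t)) : 0 < kappa b ρ t := by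
  have : NeZero (volume.restrict (tailSet b t)) :=
    ⟨Measure.restrict_eq_zero.not.2 (volume_tailSet_pos ht).ne'⟩
  exact mul_pos (Real.exp_pos _) (integral_exp_pos hρ)

end Tail

section Coordinates

def finTwoEquivComplex : (Fin 2 → ℝ) ≃L[ℝ] ℂ :=
  (ContinuousLinearEquiv.finTwoArrow ℝ ℝ).trans Complex.equivRealProdCLM.symm

lemma finTwoEquivComplex_apply (v : Fin 2 → ℝ) :
    finTwoEquivComplex v = v 0 + v 1 * Complex.I := by
  simp [finTwoEquivComplex, Complex.equivRealProdCLM_symm_apply]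

lemma enorm2_eq_norm_finTwoEquivComplex (v : Fin 2 → ℝ) :
    enorm2 v = ‖finTwoEquivComplex v‖ := by
  rw [finTwoEquivComplex_apply, Complex.norm_def, Complex.normSq_apply]
  simp [enorm2, pow_two]

lemma finTwoEquivComplex_mulVec (α β : ℝ) (v : Fin 2 → ℝ) :
    finTwoEquivComplex (!![α, β; -β, α].mulVec v) =
      (α - β * Complex.I) * finTwoEquivComplex v := by
  simp only [finTwoEquivComplex_apply, Matrix.mulVec, dotProduct, Fin.sum_univ_two]
  simp only [Matrix.of_apply, Matrix.cons_val', Matrix.cons_val_zero, Matrix.cons_val_fin_one,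
    Matrix.cons_val_one, Complex.ofReal_add, Complex.ofReal_mul, neg_mul, Complex.ofReal_neg]
  linear_combination (β * v 1 : ℂ) * Complex.I_sq

theorem ContinuousLinearEquiv.comp_hasDerivWithinAt_iff {F G : Type*} [NormedAddCommGroup F]
    [NormedSpace ℝ F] [NormedAddCommGroup G] [NormedSpace ℝ G] (e : F ≃L[ℝ] G) {f : ℝ → F}
    {f' : F} {s : Set ℝ} {t : ℝ} :
    HasDerivWithinAt (fun u => e (f u)) (e f') s t ↔ HasDerivWithinAt f f' s t :=
  ⟨fun h => by simpa [Function.comp_def] using e.symm.hasFDerivAt.comp_hasDerivWithinAt t h,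
    fun h => e.hasFDerivAt.comp_hasDerivWithinAt t h⟩

end Coordinates

def UlamStableComplex (I : Set ℝ) (lam : ℝ → ℂ) (K : ℝ) : Prop :=
  0 < K ∧
  ∀ ε : ℝ, 0 < ε →
    ∀ Φ Φ' : ℝ → ℂ,
      (∀ t ∈ I, HasDerivWithinAt Φ (Φ' t) I t) →
      ContinuousOn Φ' I →
      (∀ t ∈ I, ‖Φ' t - lam t * Φ t‖ ≤ ε) →
      ∃ X : ℝ → ℂ,
        (∀ t ∈ I, HasDerivWithinAt X (lam t * X t) I t) ∧
        ∀ t ∈ I, ‖Φ t - X t‖ ≤ K * ε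

theorem ulamStable2R_iff {I : Set ℝ} {α β : ℝ → ℝ} {K : ℝ} :
    UlamStable2R I (fun t => !![α t, β t; -(β t), α t]) K ↔
      UlamStableComplex I (fun t => α t - β t * Complex.I) K := by
  set e := finTwoEquivComplex
  have hmul (t : ℝ) (v : Fin 2 → ℝ) :
      e (!![α t, β t; -(β t), α t].mulVec v) = (α t - β t * Complex.I) * e v :=
    finTwoEquivComplex_mulVec (α t) (β t) v
  have hnorm (v w : Fin 2 → ℝ) : enorm2 (v - w) = ‖e v - e w‖ := by
    rw [enorm2_eq_norm_finTwoEquivComplex, map_sub]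
  refine and_congr_right fun _ => ⟨fun h ε hε Φ Φ' hΦ hΦ' hdef => ?_,
    fun h ε hε φ φ' hφ hφ' hdef => ?_⟩
  · obtain ⟨x, hx, hxΦ⟩ := h ε hε (fun u => e.symm (Φ u)) (fun u => e.symm (Φ' u))
      (fun t ht => e.symm.hasFDerivAt.comp_hasDerivWithinAt t (hΦ t ht))
      (e.symm.continuous.comp_continuousOn hΦ')
      (fun t ht => by rw [hnorm, hmul, e.apply_symm_apply, e.apply_symm_apply]; exact hdef t ht)
    refine ⟨fun u => e (x u), fun t ht => ?_, fun t ht => ?_⟩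
    · rw [← hmul]
      exact e.comp_hasDerivWithinAt_iff.2 (hx t ht)
    · simpa only [hnorm, e.apply_symm_apply] using hxΦ t ht
  · obtain ⟨X, hX, hXφ⟩ := h ε hε (fun u => e (φ u)) (fun u => e (φ' u))
      (fun t ht => e.comp_hasDerivWithinAt_iff.2 (hφ t ht))
      (e.continuous.comp_continuousOn hφ')
      (fun t ht => by rw [← hmul, ← hnorm]; exact hdef t ht)
    refine ⟨fun u => e.symm (X u), fun t ht => ?_, fun t ht => ?_⟩
    · rw [← e.comp_hasDerivWithinAt_iff, hmul]
      simpa only [e.apply_symm_apply] using hX t ht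
    · simpa only [hnorm, e.apply_symm_apply] using hXφ t ht

lemma eq_zero_of_tendsto_atTop_of_mul_norm_add_le {E α : Type*} [NormedAddCommGroup E]
    {l : Filter α} [l.NeBot] {w : α → ℝ} {J : α → E} {c : E} {K : ℝ}
    (hw : Tendsto w l atTop) (hJ : Tendsto J l (𝓝 0)) (hK : ∀ᶠ t in l, w t * ‖J t + c‖ ≤ K) :
    c = 0 := by
  by_contra hc
  have hnorm : Tendsto (fun t => ‖J t + c‖) l (𝓝 ‖c‖) := by
    simpa using (hJ.add_const c).norm
  obtain ⟨t, hlt, hle⟩ :=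
    ((hw.atTop_mul_pos (norm_pos_iff.2 hc) hnorm).eventually_gt_atTop K).and hK |>.exists
  exact hlt.not_ge hle

section LinearODE

variable {I : Set ℝ} {lam Λ : ℝ → ℂ}

lemma HasDerivWithinAt.mul_cexp_neg {X : ℝ → ℂ} {X' : ℂ} {t : ℝ}
    (hX : HasDerivWithinAt X X' I t) (hΛ : HasDerivWithinAt Λ (lam t) I t) :
    HasDerivWithinAt (fun u => X u * Complex.exp (-Λ u))
      ((X' - lam t * X t) * Complex.exp (-Λ t)) I t :=
  (hX.fun_mul hΛ.fun_neg.cexp).congr_deriv (by ring)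

theorem Set.OrdConnected.exists_eq_mul_cexp (hI : I.OrdConnected)
    (hΛ : ∀ t ∈ I, HasDerivWithinAt Λ (lam t) I t) {X : ℝ → ℂ}
    (hX : ∀ t ∈ I, HasDerivWithinAt X (lam t * X t) I t) :
    ∃ c, ∀ t ∈ I, X t = c * Complex.exp (Λ t) := by
  obtain ⟨c, hc⟩ := hI.exists_eq_const_of_hasDerivWithinAt_zero fun t ht => by
    simpa using (hX t ht).mul_cexp_neg (hΛ t ht)
  refine ⟨c, fun t ht => ?_⟩
  rw [← hc t ht, mul_assoc, ← Complex.exp_add, neg_add_cancel, Complex.exp_zero, mul_one]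

theorem Set.OrdConnected.exists_norm_sub_mul_cexp_le (hI : I.OrdConnected) {b : EReal}
    (hIb : ∀ t ∈ I, (t : EReal) ≤ b) (hIt : ∀ t ∈ I, tailSet b t ⊆ I)
    (hΛ : ∀ t ∈ I, HasDerivWithinAt Λ (lam t) I t) (hlam : ContinuousOn lam I)
    (hint : ∀ t ∈ I, IntegrableOn (fun s => Real.exp (-(Λ s).re)) (tailSet b t))
    {Φ Φ' : ℝ → ℂ} (hΦ : ∀ t ∈ I, HasDerivWithinAt Φ (Φ' t) I t) (hΦ' : ContinuousOn Φ' I)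
    {ε : ℝ} (hε : ∀ t ∈ I, ‖Φ' t - lam t * Φ t‖ ≤ ε) :
    ∃ c : ℂ, ∀ t ∈ I, ‖Φ t - c * Complex.exp (Λ t)‖ ≤ ε * kappa b (fun s => (Λ s).re) t := by
  set ψ' := fun u => (Φ' u - lam u * Φ u) * Complex.exp (-Λ u)
  have hΛc : ContinuousOn Λ I := fun t ht => (hΛ t ht).continuousWithinAt
  have hΦc : ContinuousOn Φ I := fun t ht => (hΦ t ht).continuousWithinAt
  have hψ'c : ContinuousOn ψ' I := (hΦ'.sub (hlam.mul hΦc)).mul hΛc.neg.cexp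
  have hψ'le : ∀ s ∈ I, ‖ψ' s‖ ≤ ε * Real.exp (-(Λ s).re) := fun s hs => by
    rw [norm_mul, Complex.norm_exp, Complex.neg_re]
    exact mul_le_mul_of_nonneg_right (hε s hs) (Real.exp_pos _).le
  have hψ'le_ae : ∀ t ∈ I, ∀ᵐ s ∂volume.restrict (tailSet b t),
      ‖ψ' s‖ ≤ ε * Real.exp (-(Λ s).re) := fun t ht =>
    (ae_restrict_mem (measurableSet_tailSet b t)).mono fun s hs => hψ'le s (hIt t ht hs)
  have hψ'i : ∀ t ∈ I, IntegrableOn ψ' (tailSet b t) := fun t ht =>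
    ((hint t ht).const_mul ε).mono'
      ((hψ'c.mono (hIt t ht)).aestronglyMeasurable (measurableSet_tailSet b t)) (hψ'le_ae t ht)
  obtain ⟨c, hc⟩ := hI.exists_eq_const_of_hasDerivWithinAt_zero
    (f := fun u => Φ u * Complex.exp (-Λ u) + ∫ s in tailSet b u, ψ' s) fun t ht =>
      (((hΦ t ht).mul_cexp_neg (hΛ t ht)).fun_add
        (hI.hasDerivWithinAt_integral_tailSet hIb hψ'c hψ'i ht)).congr_deriv (add_neg_cancel _)
  refine ⟨c, fun t ht => ?_⟩
  have hΦt : Φ t - c * Complex.exp (Λ t) = -(∫ s in tailSet b t, ψ' s) * Complex.exp (Λ t) := by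
    rw [← hc t ht, Complex.exp_neg]
    field_simp
    ring
  calc ‖Φ t - c * Complex.exp (Λ t)‖
      = ‖∫ s in tailSet b t, ψ' s‖ * Real.exp (Λ t).re := by
        rw [hΦt, norm_mul, norm_neg, Complex.norm_exp]
    _ ≤ (ε * ∫ s in tailSet b t, Real.exp (-(Λ s).re)) * Real.exp (Λ t).re := by
        gcongr
        rw [← integral_const_mul]
        exact norm_integral_le_of_norm_le ((hint t ht).const_mul ε) (hψ'le_ae t ht)
    _ = ε * kappa b (fun s => (Λ s).re) t := by
        rw [kappa]
        ring

theorem Set.OrdConnected.ulamStableComplex (hI : I.OrdConnected) {b : EReal}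
    (hIb : ∀ t ∈ I, (t : EReal) ≤ b) (hIt : ∀ t ∈ I, tailSet b t ⊆ I)
    (hΛ : ∀ t ∈ I, HasDerivWithinAt Λ (lam t) I t) (hlam : ContinuousOn lam I)
    (hint : ∀ t ∈ I, IntegrableOn (fun s => Real.exp (-(Λ s).re)) (tailSet b t))
    {K : ℝ} (hK : 0 < K) (hκ : ∀ t ∈ I, kappa b (fun s => (Λ s).re) t ≤ K) :
    UlamStableComplex I lam K := by
  refine ⟨hK, fun ε hε Φ Φ' hΦ hΦ' hdef => ?_⟩
  obtain ⟨c, hc⟩ := hI.exists_norm_sub_mul_cexp_le hIb hIt hΛ hlam hint hΦ hΦ' hdef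
  refine ⟨fun t => c * Complex.exp (Λ t), fun t ht => ?_, fun t ht => ?_⟩
  · exact ((hΛ t ht).cexp.const_mul c).congr_deriv (by ring)
  · calc ‖Φ t - c * Complex.exp (Λ t)‖ ≤ ε * kappa b (fun s => (Λ s).re) t := hc t ht
      _ ≤ K * ε := by rw [mul_comm K]; exact mul_le_mul_of_nonneg_left (hκ t ht) hε.le

theorem Set.OrdConnected.kappa_le_of_ulamStableComplex (hI : I.OrdConnected) {b : EReal}
    (hIb : ∀ t ∈ I, (t : EReal) ≤ b) (hIt : ∀ t ∈ I, tailSet b t ⊆ I)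
    (hΛ : ∀ t ∈ I, HasDerivWithinAt Λ (lam t) I t) (hlam : ContinuousOn lam I)
    (hint : ∀ t ∈ I, IntegrableOn (fun s => Real.exp (-(Λ s).re)) (tailSet b t))
    {t₀ : ℝ} (ht₀ : t₀ ∈ I) (ht₀b : (t₀ : EReal) < b)
    (hre : Tendsto (fun t => (Λ t).re) (comap (↑) (𝓝[<] b)) atTop)
    {K : ℝ} (hK : UlamStableComplex I lam K) :
    ∀ t ∈ I, kappa b (fun s => (Λ s).re) t ≤ K := by
  set J := fun u => ∫ s in tailSet b u, Real.exp (-(Λ s).re)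
  set Φ := fun u => -(Complex.exp (Λ u) * J u)
  have hΛc : ContinuousOn Λ I := fun t ht => (hΛ t ht).continuousWithinAt
  have hJ : ∀ t ∈ I, HasDerivWithinAt J (-Real.exp (-(Λ t).re)) I t :=
    fun t ht => hI.hasDerivWithinAt_integral_tailSet hIb (by fun_prop) hint ht
  have hΦ : ∀ t ∈ I, HasDerivWithinAt Φ (lam t * Φ t + Complex.exp (Λ t - (Λ t).re)) I t := by
    intro t ht
    refine ((hΛ t ht).cexp.fun_mul (hJ t ht).ofReal_comp).fun_neg.congr_deriv ?_
    rw [Complex.ofReal_neg, Complex.ofReal_exp, sub_eq_add_neg, Complex.exp_add]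
    push_cast
    ring
  have hΦc : ContinuousOn Φ I := fun t ht => (hΦ t ht).continuousWithinAt
  obtain ⟨X, hX, hXΦ⟩ := hK.2 1 one_pos Φ _ hΦ (by fun_prop)
    (fun t _ => by simp [Complex.norm_exp])
  obtain ⟨c, hc⟩ := hI.exists_eq_mul_cexp hΛ hX
  have hbound : ∀ t ∈ I, Real.exp (Λ t).re * ‖(J t : ℂ) + c‖ ≤ K := by
    intro t ht
    have h := hXΦ t ht
    rwa [hc t ht, mul_one, show Φ t - c * Complex.exp (Λ t) =
      -(Complex.exp (Λ t) * (J t + c)) by ring, norm_neg, norm_mul, Complex.norm_exp] at h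
  have : (comap ((↑) : ℝ → EReal) (𝓝[<] b)).NeBot := neBot_comap_coe_nhdsLT ht₀b
  have hc0 : c = 0 := eq_zero_of_tendsto_atTop_of_mul_norm_add_le
    (Real.tendsto_exp_atTop.comp hre)
    (Complex.continuous_ofReal.tendsto' 0 0 Complex.ofReal_zero |>.comp
      (tendsto_integral_tailSet ht₀b (hint t₀ ht₀)))
    ((eventually_mem_tailSet ht₀b).mono fun t ht => hbound t (hIt t₀ ht₀ ht))
  intro t ht
  have hJnn : 0 ≤ J t :=
    setIntegral_nonneg (measurableSet_tailSet b t) fun s _ => (Real.exp_pos _).le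
  simpa [hc0, Complex.norm_real, abs_of_nonneg hJnn, kappa] using hbound t ht

end LinearODE

lemma ordConnected_of_Ioo_subset_of_subset_Icc {a b : EReal} {I : Set ℝ}
    (hI1 : ∀ x : ℝ, a < (x : EReal) → (x : EReal) < b → x ∈ I)
    (hI2 : ∀ x ∈ I, a ≤ (x : EReal) ∧ (x : EReal) ≤ b) : I.OrdConnected := by
  refine ⟨fun x hx y hy z hz => ?_⟩
  rcases hz.1.eq_or_lt with rfl | hxz
  · exact hx
  rcases hz.2.eq_or_lt with rfl | hzy
  · exact hy
  exact hI1 z ((hI2 x hx).1.trans_lt (EReal.coe_lt_coe_iff.2 hxz))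
    ((EReal.coe_lt_coe_iff.2 hzy).trans_le (hI2 y hy).2)

lemma Set.OrdConnected.exp_neg_integral_eq {I : Set ℝ} (hI : I.OrdConnected) {al : ℝ → ℝ}
    (hal : ContinuousOn al I) {t₀ t s : ℝ} (ht₀ : t₀ ∈ I) (ht : t ∈ I) (hs : s ∈ I) :
    Real.exp (-∫ τ in t..s, al τ) =
      Real.exp (∫ τ in t₀..t, al τ) * Real.exp (-∫ τ in t₀..s, al τ) := by
  rw [← intervalIntegral.integral_interval_sub_left
    (hal.mono (hI.uIcc_subset ht₀ hs)).intervalIntegrable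
    (hal.mono (hI.uIcc_subset ht₀ ht)).intervalIntegrable, ← Real.exp_add]
  ring_nf

lemma Set.OrdConnected.integrableOn_exp_neg_integral {I : Set ℝ} (hI : I.OrdConnected)
    {al : ℝ → ℝ} (hal : ContinuousOn al I) {b : EReal} {t₀ t : ℝ} (ht₀ : t₀ ∈ I) (ht : t ∈ I)
    (hIt : tailSet b t ⊆ I)
    (hker : IntegrableOn (fun s => Real.exp (-∫ τ in t..s, al τ)) (tailSet b t)) :
    IntegrableOn (fun s => Real.exp (-∫ τ in t₀..s, al τ)) (tailSet b t) := by
  refine IntegrableOn.congr_fun (hker.const_mul (Real.exp (-∫ τ in t₀..t, al τ)))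
    (fun s hs => ?_) (measurableSet_tailSet b t)
  rw [hI.exp_neg_integral_eq hal ht₀ ht (hIt hs), ← mul_assoc, ← Real.exp_add, neg_add_cancel,
    Real.exp_zero, one_mul]

lemma Set.OrdConnected.kappa31_eq_kappa {I : Set ℝ} (hI : I.OrdConnected) {al : ℝ → ℝ}
    (hal : ContinuousOn al I) {b : EReal} {t₀ t : ℝ} (ht₀ : t₀ ∈ I) (ht : t ∈ I)
    (hIt : tailSet b t ⊆ I) :
    kappa31 b al t = kappa b (fun u => ∫ s in t₀..u, al s) t := by
  rw [kappa, ← integral_const_mul]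
  exact setIntegral_congr_fun (measurableSet_tailSet b t) fun s hs =>
    hI.exp_neg_integral_eq hal ht₀ ht (hIt hs)

theorem statement17 (a b : EReal) (hab : a < b) (I : Set ℝ)
    (hI1 : ∀ x : ℝ, a < (x : EReal) → (x : EReal) < b → x ∈ I)
    (hI2 : ∀ x ∈ I, a ≤ (x : EReal) ∧ (x : EReal) ≤ b)
    (al be : ℝ → ℝ) (hal : ContinuousOn al I) (hbe : ContinuousOn be I)
    (hker : ∀ t ∈ I, IntegrableOn
      (fun s => Real.exp (-∫ τ in t..s, al τ)) {s : ℝ | t < s ∧ (s : EReal) < b})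
    (hbdd : BddAbove (kappa31 b al '' I))
    (hlim : ∀ t₀ : ℝ, a < (t₀ : EReal) → (t₀ : EReal) < b →
        Tendsto (fun t => ∫ s in t₀..t, al s)
          (Filter.comap (fun x : ℝ => (x : EReal)) (nhdsWithin b (Iio b))) atTop) :
    UlamStable2R I (fun t => !![al t, be t; -(be t), al t]) (sSup (kappa31 b al '' I)) ∧
    ∀ K : ℝ, UlamStable2R I (fun t => !![al t, be t; -(be t), al t]) K → sSup (kappa31 b al '' I) ≤ K := by
  obtain ⟨t₀, ht₀a, ht₀b⟩ := EReal.exists_between_coe_real hab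
  have ht₀ : t₀ ∈ I := hI1 t₀ ht₀a ht₀b
  have hI : I.OrdConnected := ordConnected_of_Ioo_subset_of_subset_Icc hI1 hI2
  have hIb : ∀ t ∈ I, (t : EReal) ≤ b := fun t ht => (hI2 t ht).2
  have hIt : ∀ t ∈ I, tailSet b t ⊆ I := fun t ht s hs =>
    hI1 s ((hI2 t ht).1.trans_lt (EReal.coe_lt_coe_iff.2 hs.1)) hs.2
  set Λ : ℝ → ℂ := fun u => (∫ s in t₀..u, al s : ℝ) - (∫ s in t₀..u, be s : ℝ) * Complex.I
  have hΛ : ∀ t ∈ I, HasDerivWithinAt Λ (al t - be t * Complex.I) I t := fun t ht =>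
    (hI.hasDerivWithinAt_integral hal ht₀ ht).ofReal_comp.sub
      ((hI.hasDerivWithinAt_integral hbe ht₀ ht).ofReal_comp.mul_const _)
  have hre (s : ℝ) : (Λ s).re = ∫ τ in t₀..s, al τ := by simp [Λ]
  have hint : ∀ t ∈ I, IntegrableOn (fun s => Real.exp (-(Λ s).re)) (tailSet b t) := by
    simpa only [hre] using fun t ht =>
      hI.integrableOn_exp_neg_integral hal ht₀ ht (hIt t ht) (hker t ht)
  have hκ : ∀ t ∈ I, kappa31 b al t = kappa b (fun s => (Λ s).re) t := by
    simpa only [hre] using fun t ht => hI.kappa31_eq_kappa hal ht₀ ht (hIt t ht)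
  have hlam : ContinuousOn (fun t => (al t : ℂ) - be t * Complex.I) I := by fun_prop
  rw [ulamStable2R_iff]
  refine ⟨hI.ulamStableComplex hIb hIt hΛ hlam hint ?_ fun t ht => ?_, fun K hK => ?_⟩
  · exact (kappa_pos ht₀b (hint t₀ ht₀)).trans_le (hκ t₀ ht₀ ▸ le_csSup hbdd ⟨t₀, ht₀, rfl⟩)
  · exact hκ t ht ▸ le_csSup hbdd ⟨t, ht, rfl⟩
  · rw [ulamStable2R_iff] at hK
    refine csSup_le ⟨_, t₀, ht₀, rfl⟩ ?_
    rintro _ ⟨t, ht, rfl⟩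
    rw [hκ t ht]
    exact hI.kappa_le_of_ulamStableComplex hIb hIt hΛ hlam hint ht₀ ht₀b
      (by simpa only [hre] using hlim t₀ ht₀a ht₀b) hK t ht
end
end

section
/- Let α, β ∈ ℝ with α ≠ 0, and let A be the constant 2×2 real matrix with rows (α, β) and (−β, α). Then the system x' = Ax is Ulam stable on ℝ with respect to the Euclidean norm on ℝ², and its best (minimal) Ulam constant is K_{c3} := 1/|α|; that is, K_{c3} is an Ulam constant for x' = Ax on ℝ and every Ulam constant K for x' = Ax on ℝ satisfies K ≥ K_{c3}. -/
open MeasureTheory Filter Set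

noncomputable section

/-!
Identifying `ℝ²` with `ℂ` by `v ↦ v 0 + i v 1` turns the system into the scalar equation
`z' = c z` with `c = α - iβ`, and the Euclidean norm into the modulus. For `Re c ≠ 0` a
perturbation `f = φ' - c φ` is absorbed by the bounded solution of `e' = c e + f`, which for
`Re c > 0` is `e t = -∫_t^∞ exp (c (t - s)) f s ds` (reverse time when `Re c < 0`) and has
modulus at most `sup ‖f‖ / |Re c|`; then `φ - e` is an exact solution. The constant is sharp:
`ζ t = exp (i Im c t) / |Re c|` satisfies `‖ζ' - c ζ‖ = 1`, every solution of `z' = c z` other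
than `0` is unbounded, so a solution within bounded distance of `ζ` is `0`, at distance
`‖ζ 0‖ = 1 / |Re c|`.
-/

theorem HasDerivAt.continuousLinearEquiv_comp {𝕜 E F : Type*} [NontriviallyNormedField 𝕜]
    [NormedAddCommGroup E] [NormedSpace 𝕜 E] [NormedAddCommGroup F] [NormedSpace 𝕜 F]
    (L : E ≃L[𝕜] F) {φ : 𝕜 → E} {d : E} {t : 𝕜} (h : HasDerivAt φ d t) :
    HasDerivAt (fun s => L (φ s)) (L d) t :=
  L.hasFDerivAt.comp_hasDerivAt t h

theorem hasDerivAt_integral_Ioi {E : Type*} [NormedAddCommGroup E] [NormedSpace ℝ E]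
    [CompleteSpace E] {g : ℝ → E} (hg : Continuous g) (hint : ∀ t, IntegrableOn g (Ioi t))
    (t : ℝ) : HasDerivAt (fun u => ∫ s in Ioi u, g s) (-g t) t := by
  have hsplit :
      (fun u => ∫ s in Ioi u, g s) = fun u => (∫ s in Ioi 0, g s) - ∫ s in 0..u, g s := by
    funext u
    rw [← intervalIntegral.integral_Ioi_sub_Ioi' (hint 0) (hint u), sub_sub_cancel]
  rw [hsplit]
  exact (hg.integral_hasStrictDerivAt 0 t).hasDerivAt.const_sub _

namespace Complex

theorem hasDerivAt_exp_mul_ofReal (c : ℂ) (t : ℝ) :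
    HasDerivAt (fun s : ℝ => exp (c * s)) (c * exp (c * t)) t := by
  simpa [mul_comm] using ((hasDerivAt_id t).ofReal_comp.const_mul c).cexp

theorem norm_exp_mul_ofReal (c : ℂ) (t : ℝ) : ‖exp (c * t)‖ = Real.exp (c.re * t) := by
  simp [norm_exp]

variable {c : ℂ}

theorem exists_bounded_solution_of_re_pos (hc : 0 < c.re) {f : ℝ → ℂ} {ε : ℝ}
    (hf : Continuous f) (hfε : ∀ t, ‖f t‖ ≤ ε) :
    ∃ e : ℝ → ℂ, (∀ t, HasDerivAt e (c * e t + f t) t) ∧ ∀ t, ‖e t‖ ≤ ε / c.re := by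
  set g : ℝ → ℂ := fun s => exp (-c * s) * f s
  have hg : Continuous g := by fun_prop
  have hg_le : ∀ s, ‖g s‖ ≤ ε * Real.exp (-c.re * s) := fun s => by
    rw [norm_mul, norm_exp_mul_ofReal, neg_re, mul_comm ε]
    exact mul_le_mul_of_nonneg_left (hfε s) (Real.exp_nonneg _)
  have hmajorant : ∀ t, IntegrableOn (fun s => ε * Real.exp (-c.re * s)) (Ioi t) := fun t =>
    (integrableOn_exp_mul_Ioi (neg_neg_of_pos hc) t).const_mul ε
  have hg_int : ∀ t, IntegrableOn g (Ioi t) := fun t =>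
    (hmajorant t).mono' hg.aestronglyMeasurable.restrict (ae_of_all _ hg_le)
  refine ⟨fun t => -(exp (c * t) * ∫ s in Ioi t, g s), fun t => ?_, fun t => ?_⟩
  · have hprod := ((hasDerivAt_exp_mul_ofReal c t).mul (hasDerivAt_integral_Ioi hg hg_int t)).neg
    refine hprod.congr_deriv ?_
    have hinv : exp (c * t) * exp (-c * t) = 1 := by rw [← exp_add]; simp
    simp only [g]
    linear_combination f t * hinv
  · have hG : ‖∫ s in Ioi t, g s‖ ≤ ε * (Real.exp (-c.re * t) / c.re) := by
      refine (norm_integral_le_of_norm_le (hmajorant t) (ae_of_all _ hg_le)).trans_eq ?_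
      rw [integral_const_mul, integral_exp_mul_Ioi (neg_neg_of_pos hc), neg_div_neg_eq]
    calc ‖-(exp (c * t) * ∫ s in Ioi t, g s)‖
        ≤ Real.exp (c.re * t) * (ε * (Real.exp (-c.re * t) / c.re)) := by
          rw [norm_neg, norm_mul, norm_exp_mul_ofReal]
          exact mul_le_mul_of_nonneg_left hG (Real.exp_nonneg _)
      _ = ε / c.re := by
          rw [neg_mul, Real.exp_neg]
          field_simp

theorem exists_bounded_solution_of_re_ne_zero (hc : c.re ≠ 0) {f : ℝ → ℂ} {ε : ℝ}
    (hf : Continuous f) (hfε : ∀ t, ‖f t‖ ≤ ε) :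
    ∃ e : ℝ → ℂ, (∀ t, HasDerivAt e (c * e t + f t) t) ∧ ∀ t, ‖e t‖ ≤ ε / |c.re| := by
  rcases hc.lt_or_gt with hneg | hpos
  · -- `t ↦ e (-t)` solves `e' = c e + f` iff `e` solves `e' = -c e - f (-·)`
    obtain ⟨e, he, he_le⟩ := exists_bounded_solution_of_re_pos (c := -c) (f := fun t => -f (-t))
      (by simpa using hneg) (by fun_prop) (fun t => by simpa using hfε (-t))
    refine ⟨fun t => e (-t), fun t => ?_, fun t => ?_⟩
    · refine ((he (-t)).scomp t (hasDerivAt_neg t)).congr_deriv ?_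
      simp
    · simpa [abs_of_neg hneg] using he_le (-t)
  · simpa [abs_of_pos hpos] using exists_bounded_solution_of_re_pos hpos hf hfε

theorem eq_exp_mul_of_hasDerivAt {w : ℝ → ℂ} (hw : ∀ t, HasDerivAt w (c * w t) t) (t : ℝ) :
    w t = exp (c * t) * w 0 := by
  have hderiv : ∀ s, HasDerivAt (fun s : ℝ => exp (-c * s) * w s) 0 s := fun s =>
    ((hasDerivAt_exp_mul_ofReal (-c) s).mul (hw s)).congr_deriv (by ring)
  have hconst := is_const_of_deriv_eq_zero (fun s => (hderiv s).differentiableAt)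
    (fun s => (hderiv s).deriv) t 0
  simp only [ofReal_zero, mul_zero, exp_zero, one_mul] at hconst
  rw [← hconst, ← mul_assoc, ← exp_add]
  simp

theorem eq_zero_of_hasDerivAt_of_bounded (hc : c.re ≠ 0) {w : ℝ → ℂ}
    (hw : ∀ t, HasDerivAt w (c * w t) t) {C : ℝ} (hC : ∀ t, ‖w t‖ ≤ C) : w = 0 := by
  have hw0 : w 0 = 0 := by
    by_contra hne
    have hpos : 0 < ‖w 0‖ := norm_pos_iff.mpr hne
    set s := C / ‖w 0‖
    have hle : Real.exp s * ‖w 0‖ ≤ C := by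
      have := hC (s / c.re)
      rwa [eq_exp_mul_of_hasDerivAt hw, norm_mul, norm_exp_mul_ofReal, mul_div_cancel₀ _ hc]
        at this
    have hexp : Real.exp s ≤ s := by rwa [← le_div_iff₀ hpos] at hle
    linarith [Real.add_one_le_exp s]
  funext t
  rw [eq_exp_mul_of_hasDerivAt hw, hw0, mul_zero, Pi.zero_apply]

end Complex

def ComplexUlamStable (c : ℂ) (K : ℝ) : Prop :=
  0 < K ∧
  ∀ ε : ℝ, 0 < ε →
    ∀ φ φd : ℝ → ℂ,
      (∀ t, HasDerivAt φ (φd t) t) →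
      Continuous φd →
      (∀ t, ‖φd t - c * φ t‖ ≤ ε) →
      ∃ x : ℝ → ℂ, (∀ t, HasDerivAt x (c * x t) t) ∧ ∀ t, ‖φ t - x t‖ ≤ K * ε

section

open Complex

variable {c : ℂ}

theorem complexUlamStable_of_re_ne_zero (hc : c.re ≠ 0) : ComplexUlamStable c (1 / |c.re|) := by
  refine ⟨by positivity, fun ε _ φ φd hφ hφd hφε => ?_⟩
  have hφc : Continuous φ := continuous_iff_continuousAt.2 fun t => (hφ t).continuousAt
  obtain ⟨e, he, he_le⟩ :=
    exists_bounded_solution_of_re_ne_zero hc (f := fun t => φd t - c * φ t) (by fun_prop) hφε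
  refine ⟨fun t => φ t - e t, fun t => ((hφ t).sub (he t)).congr_deriv (by ring), fun t => ?_⟩
  simpa [div_eq_inv_mul] using he_le t

theorem ComplexUlamStable.one_div_abs_re_le (hc : c.re ≠ 0) {K : ℝ}
    (h : ComplexUlamStable c K) : 1 / |c.re| ≤ K := by
  obtain ⟨-, hstab⟩ := h
  set μ : ℂ := c - c.re
  set ζ : ℝ → ℂ := fun t => exp (μ * t) / |c.re|
  have hζ : ∀ t, HasDerivAt ζ (μ * ζ t) t := fun t =>
    ((hasDerivAt_exp_mul_ofReal μ t).div_const _).congr_deriv (mul_div_assoc _ _ _)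
  have hζ_norm : ∀ t, ‖ζ t‖ = 1 / |c.re| := fun t => by
    simp [ζ, μ, norm_exp_mul_ofReal]
  obtain ⟨w, hw, hζw⟩ := hstab 1 one_pos ζ (fun t => μ * ζ t) hζ (by fun_prop) fun t => by
    rw [← sub_mul, show μ - c = -(c.re : ℂ) by ring, norm_mul, hζ_norm, norm_neg, norm_real,
      Real.norm_eq_abs, mul_one_div_cancel (abs_ne_zero.2 hc)]
  have hw_bdd : ∀ t, ‖w t‖ ≤ K * 1 + 1 / |c.re| := fun t => by
    linarith [norm_sub_norm_le (w t) (ζ t), norm_sub_rev (w t) (ζ t), hζw t, hζ_norm t]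
  simpa [eq_zero_of_hasDerivAt_of_bounded hc hw hw_bdd, hζ_norm] using hζw 0

end

def toComplex : (Fin 2 → ℝ) ≃L[ℝ] ℂ :=
  (ContinuousLinearEquiv.finTwoArrow ℝ ℝ).trans Complex.equivRealProdCLM.symm

theorem toComplex_apply (v : Fin 2 → ℝ) : toComplex v = ⟨v 0, v 1⟩ := rfl

theorem norm_toComplex (v : Fin 2 → ℝ) : ‖toComplex v‖ = enorm2 v := by
  simp [toComplex_apply, Complex.norm_def, Complex.normSq_apply, enorm2, sq]

theorem toComplex_mulVec (a b : ℝ) (v : Fin 2 → ℝ) :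
    toComplex ((!![a, b; -b, a]).mulVec v) = ⟨a, -b⟩ * toComplex v := by
  apply Complex.ext <;> simp [toComplex_apply, dotProduct, Fin.sum_univ_two]; ring

theorem toComplex_symm_mul (a b : ℝ) (z : ℂ) :
    toComplex.symm (⟨a, -b⟩ * z) = (!![a, b; -b, a]).mulVec (toComplex.symm z) := by
  rw [ContinuousLinearEquiv.symm_apply_eq, toComplex_mulVec,
    ContinuousLinearEquiv.apply_symm_apply]

theorem ulamStable2R_univ_iff (a b K : ℝ) :
    UlamStable2R univ (fun _ => !![a, b; -b, a]) K ↔ ComplexUlamStable ⟨a, -b⟩ K := by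
  constructor
  · rintro ⟨hK, hstab⟩
    refine ⟨hK, fun ε hε φ φd hφ hφd hφε => ?_⟩
    obtain ⟨x, hx, hφx⟩ :=
      hstab ε hε (fun t => toComplex.symm (φ t)) (fun t => toComplex.symm (φd t))
      (fun t _ => ((hφ t).continuousLinearEquiv_comp _).hasDerivWithinAt)
      (toComplex.symm.continuous.comp hφd).continuousOn fun t _ => by
        rw [← norm_toComplex, map_sub, toComplex_mulVec]
        simpa using hφε t
    refine ⟨fun t => toComplex (x t), fun t => ?_, fun t => ?_⟩
    · simpa only [toComplex_mulVec] using
        (hasDerivWithinAt_univ.1 (hx t (mem_univ t))).continuousLinearEquiv_comp toComplex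
    · have hφxt := hφx t (mem_univ t)
      rwa [← norm_toComplex, map_sub, ContinuousLinearEquiv.apply_symm_apply] at hφxt
  · rintro ⟨hK, hstab⟩
    refine ⟨hK, fun ε hε φ φd hφ hφd hφε => ?_⟩
    obtain ⟨x, hx, hφx⟩ := hstab ε hε (fun t => toComplex (φ t)) (fun t => toComplex (φd t))
      (fun t => (hasDerivWithinAt_univ.1 (hφ t (mem_univ t))).continuousLinearEquiv_comp _)
      (toComplex.continuous.comp (continuousOn_univ.1 hφd)) fun t => by
        rw [← toComplex_mulVec, ← map_sub, norm_toComplex]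
        exact hφε t (mem_univ t)
    refine ⟨fun t => toComplex.symm (x t), fun t _ => ?_, fun t _ => ?_⟩
    · simpa only [toComplex_symm_mul] using
        ((hx t).continuousLinearEquiv_comp toComplex.symm).hasDerivWithinAt
    · rw [← norm_toComplex, map_sub, ContinuousLinearEquiv.apply_symm_apply]
      exact hφx t

theorem statement18 (al be : ℝ) (h : al ≠ 0) :
    UlamStable2R Set.univ (fun _ => !![al, be; -be, al]) (1 / |al|) ∧
    ∀ K : ℝ, UlamStable2R Set.univ (fun _ => !![al, be; -be, al]) K →
      1 / |al| ≤ K := by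
  have hre : (⟨al, -be⟩ : ℂ).re ≠ 0 := h
  refine ⟨(ulamStable2R_univ_iff al be _).2 (complexUlamStable_of_re_ne_zero hre), fun K hK => ?_⟩
  exact ((ulamStable2R_univ_iff al be K).1 hK).one_div_abs_re_le hre
end
end
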